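/- arXiv:2510.01488 — 2 statements merged into one kernel-verified Lean document; each statement's English description precedes it below -/
import Mathlib

section
/- Let R be a commutative ring and let F ∈ R⟦x,y⟧ be a formal power series in two variables with zero constant coefficient and with the coefficients of x and of y both equal to 1, and let [n]_F(t) be the associated n-series. Let k be a natural number such that k·1_R is a unit of R. Then [k]_F(t) = t·u for some unit u of the power series ring R⟦t⟧, whose constant coefficient is k·1_R. -/
/-- Substitution of (multivariate) formal power series: for `a : σ → MvPowerSeries τ R`
(each entry having zero constant coefficient) and `f ∈ R⟦xₛ : s ∈ σ⟧`, the coefficient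
of the monomial `d` in `f(a)` is the (finite) sum over exponents `e` of
`(coeff of e in f) * (coeff of d in ∏ₛ (a s)^(e s))`. -/
noncomputable def MvPowerSeries.substitute {σ τ R : Type*} [CommRing R]
    (a : σ → MvPowerSeries τ R) (f : MvPowerSeries σ R) : MvPowerSeries τ R :=
  fun d => ∑ᶠ e : σ →₀ ℕ, MvPowerSeries.coeff e f *
    MvPowerSeries.coeff d (e.prod fun s n => a s ^ n)

/-- Substitution of a one-variable formal power series `g ∈ R⟦z⟧` at a
(multivariate) power series `s`, i.e. `g(s)`. -/
noncomputable def PowerSeries.substitute {τ R : Type*} [CommRing R]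
    (s : MvPowerSeries τ R) (g : PowerSeries R) : MvPowerSeries τ R :=
  MvPowerSeries.substitute (fun _ : Unit => s) g

/-- The `n`-series `[n]_F(t)` of a two-variable formal power series `F ∈ R⟦x,y⟧`,
defined recursively by `[0]_F(t) = 0` and `[n+1]_F(t) = F([n]_F(t), t)`. -/
noncomputable def MvPowerSeries.nSeries {R : Type*} [CommRing R]
    (F : MvPowerSeries (Fin 2) R) : ℕ → PowerSeries R
  | 0 => 0
  | n + 1 => MvPowerSeries.substitute ![MvPowerSeries.nSeries F n, PowerSeries.X] F

/-! Substitution `F ↦ F(a)` is an algebra homomorphism (it is `MvPowerSeries.subst`). Writing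
`F = x + y + G` with `G` of order at least two and substituting series without constant term
gives `F(a, t) ≡ a + t` modulo `t²`, so by induction `[n]_F(t) ≡ n t` modulo `t²`. Hence
`[k]_F(t) = t (k + t g)`, and `k + t g` is a unit because its constant coefficient is. -/

lemma Finsupp.exists_eq_single_of_degree_eq_one {σ : Type*} {d : σ →₀ ℕ}
    (hd : d.degree = 1) : ∃ i, d = single i 1 := by
  obtain ⟨i, hi⟩ : ∃ i, d i ≠ 0 := by
    by_contra! h
    simp [show d = 0 from Finsupp.ext h] at hd
  obtain ⟨e, rfl⟩ := le_iff_exists_add.mp (single_le_iff.mpr (Nat.one_le_iff_ne_zero.mpr hi))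
  rw [map_add, degree_single] at hd
  exact ⟨i, by rw [(degree_eq_zero_iff e).mp (by omega), add_zero]⟩

namespace MvPowerSeries

variable {σ τ R : Type*} [CommRing R]

theorem substitute_eq_subst {a : σ → MvPowerSeries τ R} (ha : HasSubst a)
    (f : MvPowerSeries σ R) : substitute a f = subst a f := by
  ext d
  rw [coeff_subst ha]
  rfl

theorem two_le_order_sub_sum_X [Fintype σ] {F : MvPowerSeries σ R} (h0 : coeff 0 F = 0)
    (h1 : ∀ i, coeff (Finsupp.single i 1) F = 1) : 2 ≤ (F - ∑ i, X i).order := by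
  classical
  refine le_order fun d hd => ?_
  obtain hd0 | hd1 : d.degree = 0 ∨ d.degree = 1 := by norm_cast at hd; omega
  · simpa [(Finsupp.degree_eq_zero_iff d).mp hd0, coeff_X] using h0
  · obtain ⟨j, rfl⟩ := Finsupp.exists_eq_single_of_degree_eq_one hd1
    simp [h1, coeff_X, Finsupp.single_left_inj one_ne_zero]

theorem two_le_order_subst_sub_sum [Fintype σ] {F : MvPowerSeries σ R} (h0 : coeff 0 F = 0)
    (h1 : ∀ i, coeff (Finsupp.single i 1) F = 1) {a : σ → MvPowerSeries τ R}
    (ha : ∀ i, constantCoeff (a i) = 0) : 2 ≤ (subst a F - ∑ i, a i).order := by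
  have hsubst := hasSubst_of_constantCoeff_zero ha
  have hlin : subst a F - ∑ i, a i = subst a (F - ∑ i, X i) := by
    simp only [← coe_substAlgHom hsubst, map_sub, map_sum, substAlgHom_X]
  rw [hlin]
  calc (2 : ℕ∞) = 1 * 2 := (one_mul 2).symm
    _ ≤ (⨅ i, (a i).order) * (F - ∑ i, X i).order := by
      gcongr
      · exact le_iInf fun i => one_le_order_iff_constCoeff_eq_zero.mpr (ha i)
      · exact two_le_order_sub_sum_X h0 h1
    _ ≤ (subst a (F - ∑ i, X i)).order := le_order_subst hsubst _

end MvPowerSeries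

theorem PowerSeries.X_pow_dvd_of_le_order {R : Type*} [CommRing R] {f : PowerSeries R} {n : ℕ}
    (h : n ≤ f.order) : X ^ n ∣ f :=
  X_pow_dvd_iff.mpr fun m hm => coeff_of_lt_order m ((Nat.cast_lt.mpr hm).trans_le h)

section NSeries

open PowerSeries

variable {R : Type*} [CommRing R]

theorem X_sq_dvd_nSeries_sub_nsmul_X {F : MvPowerSeries (Fin 2) R}
    (h0 : MvPowerSeries.coeff 0 F = 0) (h1 : ∀ i, MvPowerSeries.coeff (Finsupp.single i 1) F = 1)
    (n : ℕ) : X ^ 2 ∣ F.nSeries n - n • X := by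
  induction n with
  | zero =>
    rw [MvPowerSeries.nSeries]
    simp
  | succ n ih =>
    have hc : constantCoeff (F.nSeries n) = 0 := by
      obtain ⟨g, hg⟩ := ih
      simpa using congrArg constantCoeff hg
    let a : Fin 2 → R⟦X⟧ := ![F.nSeries n, X]
    have ha : ∀ i, MvPowerSeries.constantCoeff (a i) = 0 :=
      Fin.forall_fin_two.mpr ⟨hc, constantCoeff_X⟩
    have hsucc : F.nSeries (n + 1) - (n + 1) • X
        = (MvPowerSeries.subst a F - ∑ i, a i) + (F.nSeries n - n • X) := by
      rw [MvPowerSeries.nSeries, MvPowerSeries.substitute_eq_subst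
        (MvPowerSeries.hasSubst_of_constantCoeff_zero ha), Fin.sum_univ_two]
      simp only [a, Matrix.cons_val_zero, Matrix.cons_val_one, succ_nsmul]
      abel
    rw [hsucc]
    refine dvd_add (X_pow_dvd_of_le_order ?_) ih
    rw [order_eq_order]
    exact MvPowerSeries.two_le_order_subst_sub_sum h0 h1 ha

end NSeries

/-- Let `R` be a commutative ring, `F ∈ R⟦x,y⟧` with zero constant
coefficient and coefficients of `x` and `y` both `1`, and `[n]_F` the associated
`n`-series.  Let `k` be a natural number such that `k • 1_R` is a unit of `R`.
Then `[k]_F(t) = t * u` for some unit `u` of `R⟦t⟧` whose constant coefficient is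
`k • 1_R`. -/
theorem stmt4 {R : Type*} [CommRing R] (F : MvPowerSeries (Fin 2) R)
    (hF0 : MvPowerSeries.coeff 0 F = 0)
    (hFx : MvPowerSeries.coeff (Finsupp.single (0 : Fin 2) 1) F = 1)
    (hFy : MvPowerSeries.coeff (Finsupp.single (1 : Fin 2) 1) F = 1)
    (k : ℕ) (hk : IsUnit (k • (1 : R))) :
    ∃ u : (PowerSeries R)ˣ,
      MvPowerSeries.nSeries F k = PowerSeries.X * (u : PowerSeries R) ∧
        PowerSeries.constantCoeff (u : PowerSeries R) = k • (1 : R) := by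
  open PowerSeries in
  obtain ⟨g, hg⟩ := X_sq_dvd_nSeries_sub_nsmul_X hF0 (Fin.forall_fin_two.mpr ⟨hFx, hFy⟩) k
  have hu : constantCoeff ((k : R⟦X⟧) + X * g) = k • 1 := by simp
  refine ⟨(isUnit_iff_constantCoeff.mpr (hu ▸ hk)).unit, ?_, hu⟩
  rw [IsUnit.unit_spec, sub_eq_iff_eq_add.mp hg, nsmul_eq_mul]
  ring
end

section
/- Let A = ℚ[β] be the polynomial ring in one variable β over ℚ. Let L ∈ A⟦z⟧ be the power series with constant coefficient 0 and with coefficient of zⁿ equal to β^{n−1}/n for every n ≥ 1. Let M ∈ A⟦z⟧ be the power series whose coefficient of zⁿ is β^{n−1}/n if n is a power of 3 and 0 otherwise. Suppose f ∈ A⟦x⟧ has constant coefficient 0 and satisfies M(f(x)) = L(x) (substitution of f into M). Then the coefficients of f satisfy: coefficient of x is 1, coefficient of x² is β/2, coefficient of x³ is 0, coefficient of x⁴ is −β³/4, and coefficient of x⁵ is −β⁴/20. -/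
theorem MvPowerSeries.substitute_eq_subst_s11 {σ τ R : Type*} [CommRing R]
    {a : σ → MvPowerSeries τ R} (ha : HasSubst a) (f : MvPowerSeries σ R) :
    substitute a f = subst a f := by
  ext e
  rw [coeff_subst ha]
  rfl

namespace PowerSeries

variable {R : Type*} [CommRing R]

theorem substitute_eq_subst_s11 {s : R⟦X⟧} (hs : constantCoeff s = 0) (g : R⟦X⟧) :
    substitute s g = g.subst s :=
  MvPowerSeries.substitute_eq_subst_s11 (HasSubst.of_constantCoeff_zero' hs).const g

theorem coeff_subst_eq_of_forall_coeff_eq {f g h : R⟦X⟧} (hf : constantCoeff f = 0) {n d : ℕ}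
    (hd : d < n) (hgh : ∀ k < n, coeff k g = coeff k h) :
    coeff d (g.subst f) = coeff d (h.subst f) := by
  have hsub : (n : ℕ∞) ≤ (g - h).order :=
    le_order _ _ fun k hk => by simp [hgh k (by exact_mod_cast hk)]
  rw [← sub_eq_zero, ← map_sub, ← subst_sub (HasSubst.of_constantCoeff_zero' hf)]
  exact coeff_of_lt_order _ ((by exact_mod_cast hd : (d : ℕ∞) < n).trans_le
    (hsub.trans (le_order_subst_left' hf)))

theorem subst_X_add_C_mul_X_pow {f : R⟦X⟧} (hf : constantCoeff f = 0) (c : R) (m : ℕ) :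
    (X + C c * X ^ m).subst f = f + C c * f ^ m := by
  have hs := HasSubst.of_constantCoeff_zero' hf
  rw [subst_add hs, subst_mul hs, subst_pow hs, subst_X hs, subst_C]
  rfl

theorem coeff_pow_three_of_constantCoeff_eq_zero {f : R⟦X⟧} (hf : constantCoeff f = 0) :
    coeff 1 (f ^ 3) = 0 ∧ coeff 2 (f ^ 3) = 0 ∧ coeff 3 (f ^ 3) = coeff 1 f ^ 3 ∧
    coeff 4 (f ^ 3) = 3 * coeff 1 f ^ 2 * coeff 2 f ∧
    coeff 5 (f ^ 3) = 3 * coeff 1 f ^ 2 * coeff 3 f + 3 * coeff 1 f * coeff 2 f ^ 2 := by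
  simp only [pow_succ, pow_zero, one_mul, coeff_mul, Finset.Nat.sum_antidiagonal_succ,
    Finset.Nat.antidiagonal_zero, Finset.sum_singleton, coeff_zero_eq_constantCoeff_apply, hf]
  refine ⟨?_, ?_, ?_, ?_, ?_⟩ <;> ring

end PowerSeries

theorem Nat.three_pow_eq_one_or_eq_three_of_lt_nine {k : ℕ} (h : 3 ^ k < 9) :
    3 ^ k = 1 ∨ 3 ^ k = 3 := by
  have hk : k < 2 := (Nat.pow_lt_pow_iff_right (by norm_num : 1 < 3)).1 (by simpa using h)
  interval_cases k <;> simp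

section ThreeTypicalLog

open PowerSeries

variable {M : PowerSeries (Polynomial ℚ)}
  (hM : ∀ n : ℕ, (∃ k : ℕ, n = 3 ^ k) →
    coeff n M = Polynomial.C ((n : ℚ)⁻¹) * Polynomial.X ^ (n - 1))
  (hM' : ∀ n : ℕ, (¬ ∃ k : ℕ, n = 3 ^ k) → coeff n M = 0)
include hM hM'

theorem coeff_eq_coeff_X_add_C_mul_X_pow_three_of_lt_nine {n : ℕ} (hn : n < 9) :
    coeff n M = coeff n (X + C (Polynomial.C (3 : ℚ)⁻¹ * Polynomial.X ^ 2) * X ^ 3) := by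
  by_cases hpow : ∃ k, n = 3 ^ k
  · obtain ⟨k, rfl⟩ := hpow
    rw [hM _ ⟨k, rfl⟩, map_add, coeff_X, coeff_C_mul_X_pow]
    rcases Nat.three_pow_eq_one_or_eq_three_of_lt_nine hn with h | h <;> simp [h]
  · have h1 : n ≠ 1 := fun h => hpow ⟨0, h⟩
    have h3 : n ≠ 3 := fun h => hpow ⟨1, h⟩
    rw [hM' n hpow, map_add, coeff_X, coeff_C_mul_X_pow, if_neg h1, if_neg h3, add_zero]

theorem coeff_substitute_of_lt_nine {f : PowerSeries (Polynomial ℚ)}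
    (hf : constantCoeff f = 0) {d : ℕ} (hd : d < 9) :
    coeff d (substitute f M) =
      coeff d f + Polynomial.C (3 : ℚ)⁻¹ * Polynomial.X ^ 2 * coeff d (f ^ 3) := by
  rw [substitute_eq_subst_s11 hf, coeff_subst_eq_of_forall_coeff_eq hf hd fun k hk =>
      coeff_eq_coeff_X_add_C_mul_X_pow_three_of_lt_nine hM hM' hk,
    subst_X_add_C_mul_X_pow hf, map_add, coeff_C_mul]

end ThreeTypicalLog

theorem stmt11_general (L M : PowerSeries (Polynomial ℚ))
    (hL : ∀ n : ℕ, 1 ≤ n → PowerSeries.coeff n L =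
      Polynomial.C ((n : ℚ)⁻¹) * Polynomial.X ^ (n - 1))
    (hM : ∀ n : ℕ, (∃ k : ℕ, n = 3 ^ k) →
      PowerSeries.coeff n M =
        Polynomial.C ((n : ℚ)⁻¹) * Polynomial.X ^ (n - 1))
    (hM' : ∀ n : ℕ, (¬ ∃ k : ℕ, n = 3 ^ k) →
      PowerSeries.coeff n M = 0)
    (f : PowerSeries (Polynomial ℚ))
    (hf0 : PowerSeries.constantCoeff f = 0)
    (hMf : PowerSeries.substitute f M = L) :
    PowerSeries.coeff 1 f = 1 ∧
    PowerSeries.coeff 2 f = Polynomial.C ((2 : ℚ)⁻¹) * Polynomial.X ∧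
    PowerSeries.coeff 3 f = 0 ∧
    PowerSeries.coeff 4 f =
      -(Polynomial.C ((4 : ℚ)⁻¹) * Polynomial.X ^ 3) ∧
    PowerSeries.coeff 5 f =
      -(Polynomial.C ((20 : ℚ)⁻¹) * Polynomial.X ^ 4) := by
  have key (d : ℕ) (hd1 : 1 ≤ d) (hd9 : d < 9) :
      Polynomial.C ((d : ℚ)⁻¹) * Polynomial.X ^ (d - 1) = PowerSeries.coeff d f +
        Polynomial.C (3 : ℚ)⁻¹ * Polynomial.X ^ 2 * PowerSeries.coeff d (f ^ 3) := by
    rw [← hL d hd1, ← hMf, coeff_substitute_of_lt_nine hM hM' hf0 hd9]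
  obtain ⟨c1, c2, c3, c4, c5⟩ := PowerSeries.coeff_pow_three_of_constantCoeff_eq_zero hf0
  have e1 : PowerSeries.coeff 1 f = 1 := by simpa [c1] using (key 1 le_rfl (by norm_num)).symm
  have e2 : PowerSeries.coeff 2 f = Polynomial.C (2 : ℚ)⁻¹ * Polynomial.X := by
    simpa [c2] using (key 2 (by norm_num) (by norm_num)).symm
  have e3 : PowerSeries.coeff 3 f = 0 := by simpa [c3, e1] using key 3 (by norm_num) (by norm_num)
  have e4 : PowerSeries.coeff 4 f =
      Polynomial.C ((4 : ℚ)⁻¹ - 3⁻¹ * 3 * 2⁻¹) * Polynomial.X ^ 3 := by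
    have h := key 4 (by norm_num) (by norm_num)
    rw [c4, e1, e2, Nat.cast_ofNat] at h
    rw [map_sub, map_mul, map_mul, map_ofNat]
    linear_combination -h
  have e5 : PowerSeries.coeff 5 f =
      Polynomial.C ((5 : ℚ)⁻¹ - 3⁻¹ * 3 * 2⁻¹ * 2⁻¹) * Polynomial.X ^ 4 := by
    have h := key 5 (by norm_num) (by norm_num)
    rw [c5, e1, e2, e3, Nat.cast_ofNat] at h
    rw [map_sub, map_mul, map_mul, map_mul, map_ofNat]
    linear_combination -h
  refine ⟨e1, e2, e3, ?_, ?_⟩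
  · rw [e4]; norm_num
  · rw [e5]; norm_num

/-- Let `A = ℚ[β]`.  Let `L ∈ A⟦z⟧` have constant coefficient `0` and
coefficient of `zⁿ` equal to `β^(n−1)/n` for every `n ≥ 1`.  Let `M ∈ A⟦z⟧` have
coefficient of `zⁿ` equal to `β^(n−1)/n` if `n` is a power of `3` and `0` otherwise.
If `f ∈ A⟦x⟧` has constant coefficient `0` and satisfies `M(f(x)) = L(x)`, then the
coefficients of `f` satisfy: coefficient of `x` is `1`, of `x²` is `β/2`, of `x³`
is `0`, of `x⁴` is `−β³/4`, and of `x⁵` is `−β⁴/20`. -/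
theorem stmt11 (L M : PowerSeries (Polynomial ℚ))
    (hL0 : PowerSeries.constantCoeff L = 0)
    (hL : ∀ n : ℕ, 1 ≤ n → PowerSeries.coeff n L =
      Polynomial.C ((n : ℚ)⁻¹) * Polynomial.X ^ (n - 1))
    (hM : ∀ n : ℕ, (∃ k : ℕ, n = 3 ^ k) →
      PowerSeries.coeff n M =
        Polynomial.C ((n : ℚ)⁻¹) * Polynomial.X ^ (n - 1))
    (hM' : ∀ n : ℕ, (¬ ∃ k : ℕ, n = 3 ^ k) →
      PowerSeries.coeff n M = 0)
    (f : PowerSeries (Polynomial ℚ))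
    (hf0 : PowerSeries.constantCoeff f = 0)
    (hMf : PowerSeries.substitute f M = L) :
    PowerSeries.coeff 1 f = 1 ∧
    PowerSeries.coeff 2 f = Polynomial.C ((2 : ℚ)⁻¹) * Polynomial.X ∧
    PowerSeries.coeff 3 f = 0 ∧
    PowerSeries.coeff 4 f =
      -(Polynomial.C ((4 : ℚ)⁻¹) * Polynomial.X ^ 3) ∧
    PowerSeries.coeff 5 f =
      -(Polynomial.C ((20 : ℚ)⁻¹) * Polynomial.X ^ 4) :=
  stmt11_general L M hL hM hM' f hf0 hMf
end
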